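/- (Deterministic one-step estimate.) Let g be μ_g-strongly convex and each f_i* be μ_i-strongly convex (μ_g, μ_i ≥ 0), and consider the deterministic updates x^{(k+1)} = prox_{T_{(k)}}^g(x^{(k)} − T_{(k)} A* ȳ^{(k)}) and ŷ_i^{(k+1)} = prox_{[S_{(k)}]_i}^{f_i*}(y_i^{(k)} + [S_{(k)}]_i A_i x^{(k+1)}) for i = 1,…,n. Then for any (x, y) ∈ 𝕏 × 𝕐: ‖x^{(k)} − x‖²_{T_{(k)}^{-1}} + ‖y^{(k)} − y‖²_{S_{(k)}^{-1}} ≥ ‖x^{(k+1)} − x‖²_{T_{(k)}^{-1} + μ_g I} + ‖ŷ^{(k+1)} − y‖²_{S_{(k)}^{-1} + M} + 2( 𝒢(x^{(k+1)} | w) + ℱ(ŷ^{(k+1)} | w) ) − 2⟨A(x^{(k+1)} − x), ŷ^{(k+1)} − ȳ^{(k)}⟩ + ‖x^{(k+1)} − x^{(k)}‖²_{T_{(k)}^{-1}} + ‖ŷ^{(k+1)} − y^{(k)}‖²_{S_{(k)}^{-1}}, where M = diag(μ_1 I, …, μ_n I) and w = (x, y). -/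
import Mathlib

open scoped RealInnerProductSpace

/-- `x` is the proximal point `prox_B^f(z)` for the step size operator `B` with inverse
`Binv`, i.e. the minimizer of `u ↦ ½‖u − z‖²_{B⁻¹} + f(u)`. -/
def IsProx {E : Type*} [NormedAddCommGroup E] [InnerProductSpace ℝ E]
    (Binv : E →L[ℝ] E) (f : E → ℝ) (z x : E) : Prop :=
  ∀ u : E, (1 / 2) * ⟪Binv (x - z), x - z⟫ + f x ≤ (1 / 2) * ⟪Binv (u - z), u - z⟫ + f u

lemma key_prox {E : Type*} [NormedAddCommGroup E] [InnerProductSpace ℝ E]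
    (Binv : E →L[ℝ] E) (hB : ∀ a b : E, ⟪Binv a, b⟫ = ⟪a, Binv b⟫)
    (hBpos : ∀ v : E, 0 ≤ ⟪Binv v, v⟫)
    (f : E → ℝ) (μ : ℝ) (hμ : 0 ≤ μ)
    (hconv : ConvexOn ℝ Set.univ (fun u => f u - μ / 2 * ‖u‖ ^ 2))
    (z x : E) (hx : IsProx Binv f z x) (u : E) :
    f x + ⟪Binv (z - x), u - x⟫ + μ / 2 * ‖u - x‖ ^ 2 ≤ f u := by
  set C : ℝ := f u - f x - ⟪Binv (z - x), u - x⟫ - μ / 2 * ‖u - x‖ ^ 2 with hCdef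
  set D : ℝ := μ / 2 * ‖u - x‖ ^ 2 + (1 / 2) * ⟪Binv (u - x), u - x⟫ with hDdef
  have hD0 : 0 ≤ D := by
    have h1 := hBpos (u - x)
    have h2 : (0:ℝ) ≤ ‖u - x‖ ^ 2 := by positivity
    have h3 : (0:ℝ) ≤ μ / 2 * ‖u - x‖ ^ 2 := by positivity
    rw [hDdef]; linarith
  have key : ∀ t : ℝ, 0 < t → t ≤ 1 → 0 ≤ C + t * D := by
    intro t ht0 ht1
    set v : E := x + t • (u - x) with hvdef
    have hxv := hx v
    have hq : ⟪Binv (v - z), v - z⟫ = ⟪Binv (x - z), x - z⟫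
        + 2 * t * ⟪Binv (u - x), x - z⟫ + t ^ 2 * ⟪Binv (u - x), u - x⟫ := by
      have hvz : v - z = (x - z) + t • (u - x) := by rw [hvdef]; abel
      rw [hvz]
      simp only [map_add, map_smul, inner_add_left, inner_add_right,
        real_inner_smul_left, real_inner_smul_right]
      have hsym : ⟪Binv (x - z), u - x⟫ = ⟪Binv (u - x), x - z⟫ := by
        rw [hB, real_inner_comm]
      rw [hsym]; ring
    have hv2 : v = (1 - t) • x + t • u := by rw [hvdef]; module
    have hnorm : ‖v‖ ^ 2 = (1 - t) * ‖x‖ ^ 2 + t * ‖u‖ ^ 2 - t * (1 - t) * ‖u - x‖ ^ 2 := by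
      rw [hv2]
      have e : ∀ w : E, ‖w‖ ^ 2 = ⟪w, w⟫ := fun w => (real_inner_self_eq_norm_sq w).symm
      simp only [e]
      simp only [inner_add_left, inner_add_right, inner_sub_left, inner_sub_right,
        real_inner_smul_left, real_inner_smul_right]
      rw [real_inner_comm u x]; ring
    have hcc := hconv.2 (Set.mem_univ x) (Set.mem_univ u)
      (by linarith : (0:ℝ) ≤ 1 - t) ht0.le (by ring)
    rw [← hv2] at hcc
    simp only [smul_eq_mul] at hcc
    have hnorm2 : μ / 2 * ‖v‖ ^ 2 = μ / 2 * ‖x‖ ^ 2 - μ / 2 * t * ‖x‖ ^ 2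
        + μ / 2 * t * ‖u‖ ^ 2 - μ / 2 * t * (1 - t) * ‖u - x‖ ^ 2 := by
      rw [hnorm]; ring
    have hcc2 : (1 - t) * (f x - μ / 2 * ‖x‖ ^ 2) + t * (f u - μ / 2 * ‖u‖ ^ 2)
        = f x - t * f x + t * f u - (μ / 2 * ‖x‖ ^ 2 - μ / 2 * t * ‖x‖ ^ 2
          + μ / 2 * t * ‖u‖ ^ 2) := by ring
    have hcvx : f v ≤ (1 - t) * f x + t * f u - μ / 2 * (t * (1 - t)) * ‖u - x‖ ^ 2 := by
      have e2 : (1 - t) * f x + t * f u - μ / 2 * (t * (1 - t)) * ‖u - x‖ ^ 2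
          = f x - t * f x + t * f u - μ / 2 * t * (1 - t) * ‖u - x‖ ^ 2 := by ring
      rw [e2]
      linarith [hcc, hnorm2, hcc2]
    rw [hq] at hxv
    have hneg : ⟪Binv (u - x), x - z⟫ = - ⟪Binv (z - x), u - x⟫ := by
      rw [hB, real_inner_comm]
      rw [show x - z = -(z - x) from by abel, map_neg, inner_neg_left]
    have hid : t * (C + t * D) = t * ⟪Binv (u - x), x - z⟫
        + t ^ 2 / 2 * ⟪Binv (u - x), u - x⟫ + t * (f u - f x)
        - μ / 2 * (t * (1 - t)) * ‖u - x‖ ^ 2 := by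
      rw [hCdef, hDdef, hneg]; ring
    have h1 : 0 ≤ t * (C + t * D) := by
      rw [hid]; linarith [hxv, hcvx]
    have h2 := le_of_mul_le_mul_left (by linarith : t * 0 ≤ t * (C + t * D)) ht0
    linarith
  by_contra hCneg
  push_neg at hCneg
  have hC : C < 0 := by rw [hCdef]; linarith
  set t : ℝ := min 1 ((-C) / (2 * (D + 1))) with htdef
  have hDpos : (0:ℝ) < 2 * (D + 1) := by linarith
  have ht0 : 0 < t := lt_min one_pos (div_pos (by linarith [hC]) hDpos)
  have h2 := key t ht0 (min_le_left _ _)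
  have ht2 : t ≤ (-C) / (2 * (D + 1)) := min_le_right _ _
  have h3 : t * (2 * (D + 1)) ≤ -C := (le_div_iff₀ hDpos).mp ht2
  have h4 : t * (2 * (D + 1)) = 2 * (t * D) + 2 * t := by ring
  linarith [h2, h3, ht0, hC]

lemma quad_expand {E : Type*} [NormedAddCommGroup E] [InnerProductSpace ℝ E]
    (B : E →L[ℝ] E) (hB : ∀ a b : E, ⟪B a, b⟫ = ⟪a, B b⟫) (a b : E) :
    ⟪B (a - b), a - b⟫ = ⟪B a, a⟫ - 2 * ⟪B a, b⟫ + ⟪B b, b⟫ := by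
  simp only [map_sub, inner_sub_left, inner_sub_right]
  have h : ⟪B b, a⟫ = ⟪B a, b⟫ := by rw [hB, real_inner_comm]
  rw [h]; ring

/-- Deterministic one-step estimate, Lemma 3 of the paper.
For `μ_g`-strongly convex `g`, `μ_i`-strongly convex `f_i*` (`μ_g, μ_i ≥ 0`) and the
deterministic updates `x^{(k+1)} = prox_{T_k}^g(x^{(k)} − T_k A* ȳ^{(k)})`,
`ŷ_i^{(k+1)} = prox_{[S_k]_i}^{f_i*}(y_i^{(k)} + [S_k]_i A_i x^{(k+1)})`, for any `(x,y)`: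
`‖x^{(k)}−x‖²_{T_k⁻¹} + ‖y^{(k)}−y‖²_{S_k⁻¹}
  ≥ ‖x^{(k+1)}−x‖²_{T_k⁻¹+μ_g I} + ‖ŷ^{(k+1)}−y‖²_{S_k⁻¹+M}
    + 2(𝒢(x^{(k+1)}|w) + ℱ(ŷ^{(k+1)}|w)) − 2⟨A(x^{(k+1)}−x), ŷ^{(k+1)}−ȳ^{(k)}⟩
    + ‖x^{(k+1)}−x^{(k)}‖²_{T_k⁻¹} + ‖ŷ^{(k+1)}−y^{(k)}‖²_{S_k⁻¹}`. -/
theorem deterministic_one_step_estimate {n : ℕ}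
    (X : Type*) [NormedAddCommGroup X] [InnerProductSpace ℝ X] [CompleteSpace X]
    (Y : Fin n → Type*) [∀ i, NormedAddCommGroup (Y i)] [∀ i, InnerProductSpace ℝ (Y i)]
    [∀ i, CompleteSpace (Y i)]
    (A : ∀ i, X →L[ℝ] Y i) (g : X → ℝ) (fstar : ∀ i, Y i → ℝ)
    (μg : ℝ) (μ : Fin n → ℝ) (hμg : 0 ≤ μg) (hμ : ∀ i, 0 ≤ μ i)
    (hg : ConvexOn ℝ Set.univ (fun x => g x - μg / 2 * ‖x‖ ^ 2))
    (hfstar : ∀ i, ConvexOn ℝ Set.univ (fun u => fstar i u - μ i / 2 * ‖u‖ ^ 2))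
    -- step size operators (self-adjoint, positive definite) and their inverses
    (T Tinv : X →L[ℝ] X) (S Sinv : ∀ i, Y i →L[ℝ] Y i)
    (hT : IsSelfAdjoint T) (hTpos : ∀ x : X, x ≠ 0 → 0 < ⟪T x, x⟫)
    (hTinv : Tinv.comp T = ContinuousLinearMap.id ℝ X ∧
      T.comp Tinv = ContinuousLinearMap.id ℝ X)
    (hS : ∀ i, IsSelfAdjoint (S i)) (hSpos : ∀ i, ∀ u : Y i, u ≠ 0 → 0 < ⟪S i u, u⟫)
    (hSinv : ∀ i, (Sinv i).comp (S i) = ContinuousLinearMap.id ℝ (Y i) ∧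
      (S i).comp (Sinv i) = ContinuousLinearMap.id ℝ (Y i))
    -- the updates
    (xk x1 : X) (yk yhat ybar : ∀ i, Y i)
    (hx1 : IsProx Tinv g (xk - T (∑ i, (ContinuousLinearMap.adjoint (A i)) (ybar i))) x1)
    (hyhat : ∀ i, IsProx (Sinv i) (fstar i) (yk i + S i (A i x1)) (yhat i)) :
    ∀ (x : X) (y : ∀ i, Y i),
      ⟪Tinv (x1 - x), x1 - x⟫ + μg * ‖x1 - x‖ ^ 2 +
        (∑ i, (⟪Sinv i (yhat i - y i), yhat i - y i⟫ + μ i * ‖yhat i - y i‖ ^ 2)) +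
        2 * ((g x1 - g x - ⟪-(∑ i, (ContinuousLinearMap.adjoint (A i)) (y i)), x1 - x⟫) +
          ∑ i, (fstar i (yhat i) - fstar i (y i) - ⟪A i x, yhat i - y i⟫)) -
        2 * (∑ i, ⟪A i (x1 - x), yhat i - ybar i⟫) +
        ⟪Tinv (x1 - xk), x1 - xk⟫ +
        (∑ i, ⟪Sinv i (yhat i - yk i), yhat i - yk i⟫) ≤
      ⟪Tinv (xk - x), xk - x⟫ + ∑ i, ⟪Sinv i (yk i - y i), yk i - y i⟫ := by
  intro x y
  -- pointwise inverse identities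
  have hTl : ∀ v, Tinv (T v) = v := fun v => by
    have h := ContinuousLinearMap.ext_iff.mp hTinv.1 v; simpa using h
  have hTr : ∀ v, T (Tinv v) = v := fun v => by
    have h := ContinuousLinearMap.ext_iff.mp hTinv.2 v; simpa using h
  have hSl : ∀ i v, Sinv i (S i v) = v := fun i v => by
    have h := ContinuousLinearMap.ext_iff.mp (hSinv i).1 v; simpa using h
  have hSr : ∀ i v, S i (Sinv i v) = v := fun i v => by
    have h := ContinuousLinearMap.ext_iff.mp (hSinv i).2 v; simpa using h
  -- symmetry
  have hTsym : ∀ a b : X, ⟪T a, b⟫ = ⟪a, T b⟫ := fun a b => hT.isSymmetric a b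
  have hSsym : ∀ i, ∀ a b : Y i, ⟪S i a, b⟫ = ⟪a, S i b⟫ := fun i a b => (hS i).isSymmetric a b
  have hTinvsym : ∀ a b : X, ⟪Tinv a, b⟫ = ⟪a, Tinv b⟫ := fun a b => by
    calc ⟪Tinv a, b⟫ = ⟪Tinv a, T (Tinv b)⟫ := by rw [hTr]
      _ = ⟪T (Tinv a), Tinv b⟫ := (hTsym (Tinv a) (Tinv b)).symm
      _ = ⟪a, Tinv b⟫ := by rw [hTr]
  have hSinvsym : ∀ i, ∀ a b : Y i, ⟪Sinv i a, b⟫ = ⟪a, Sinv i b⟫ := fun i a b => by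
    calc ⟪Sinv i a, b⟫ = ⟪Sinv i a, S i (Sinv i b)⟫ := by rw [hSr]
      _ = ⟪S i (Sinv i a), Sinv i b⟫ := (hSsym i (Sinv i a) (Sinv i b)).symm
      _ = ⟪a, Sinv i b⟫ := by rw [hSr]
  -- positivity
  have hTinvpos : ∀ v : X, 0 ≤ ⟪Tinv v, v⟫ := fun v => by
    rcases eq_or_ne (Tinv v) 0 with h | h
    · rw [h]; simp
    · have := hTpos (Tinv v) h
      calc (0:ℝ) ≤ ⟪T (Tinv v), Tinv v⟫ := this.le
        _ = ⟪Tinv v, T (Tinv v)⟫ := hTsym _ _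
        _ = ⟪Tinv v, v⟫ := by rw [hTr]
  have hSinvpos : ∀ i, ∀ v : Y i, 0 ≤ ⟪Sinv i v, v⟫ := fun i v => by
    rcases eq_or_ne (Sinv i v) 0 with h | h
    · rw [h]; simp
    · have := hSpos i (Sinv i v) h
      calc (0:ℝ) ≤ ⟪S i (Sinv i v), Sinv i v⟫ := this.le
        _ = ⟪Sinv i v, S i (Sinv i v)⟫ := hSsym i _ _
        _ = ⟪Sinv i v, v⟫ := by rw [hSr]
  -- the x-inequality from key_prox
  have hI := key_prox Tinv hTinvsym hTinvpos g μg hμg hg _ x1 hx1 x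
  have hIfin : g x1 + ⟪Tinv (x1 - xk), x1 - x⟫
      - ∑ i, ⟪A i x, ybar i⟫ + ∑ i, ⟪A i x1, ybar i⟫
      + μg / 2 * ‖x1 - x‖ ^ 2 ≤ g x := by
    have e1 : Tinv (xk - T (∑ i, (ContinuousLinearMap.adjoint (A i)) (ybar i)) - x1)
        = Tinv (xk - x1) - ∑ i, (ContinuousLinearMap.adjoint (A i)) (ybar i) := by
      rw [show xk - T (∑ i, (ContinuousLinearMap.adjoint (A i)) (ybar i)) - x1
          = (xk - x1) - T (∑ i, (ContinuousLinearMap.adjoint (A i)) (ybar i)) from by abel,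
        map_sub, hTl]
    rw [e1, inner_sub_left] at hI
    have e2 : ⟪Tinv (xk - x1), x - x1⟫ = ⟪Tinv (x1 - xk), x1 - x⟫ := by
      rw [show xk - x1 = -(x1 - xk) from by abel, show x - x1 = -(x1 - x) from by abel,
        map_neg, inner_neg_neg]
    have e3 : ⟪∑ i, (ContinuousLinearMap.adjoint (A i)) (ybar i), x - x1⟫
        = ∑ i, ⟪A i x, ybar i⟫ - ∑ i, ⟪A i x1, ybar i⟫ := by
      rw [sum_inner, ← Finset.sum_sub_distrib]
      refine Finset.sum_congr rfl fun i _ => ?_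
      rw [ContinuousLinearMap.adjoint_inner_left, map_sub, inner_sub_right,
        real_inner_comm (ybar i) (A i x), real_inner_comm (ybar i) (A i x1)]
    have e4 : ‖x - x1‖ = ‖x1 - x‖ := norm_sub_rev _ _
    rw [e2, e3, e4] at hI
    linarith [hI]
  -- per-i inequality from key_prox
  have hII : ∀ i, fstar i (yhat i) + ⟪Sinv i (yhat i - yk i), yhat i - y i⟫
      + ⟪A i x1, y i⟫ - ⟪A i x1, yhat i⟫ + μ i / 2 * ‖yhat i - y i‖ ^ 2
      ≤ fstar i (y i) := by
    intro i
    have h := key_prox (Sinv i) (hSinvsym i) (hSinvpos i) (fstar i) (μ i) (hμ i)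
      (hfstar i) _ (yhat i) (hyhat i) (y i)
    have e1 : Sinv i (yk i + S i (A i x1) - yhat i)
        = Sinv i (yk i - yhat i) + A i x1 := by
      rw [show yk i + S i (A i x1) - yhat i = (yk i - yhat i) + S i (A i x1) from by abel,
        map_add, hSl]
    rw [e1, inner_add_left] at h
    have e2 : ⟪Sinv i (yk i - yhat i), y i - yhat i⟫
        = ⟪Sinv i (yhat i - yk i), yhat i - y i⟫ := by
      rw [show yk i - yhat i = -(yhat i - yk i) from by abel,
        show y i - yhat i = -(yhat i - y i) from by abel, map_neg, inner_neg_neg]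
    have e3 : ⟪A i x1, y i - yhat i⟫ = ⟪A i x1, y i⟫ - ⟪A i x1, yhat i⟫ :=
      inner_sub_right _ _ _
    have e4 : ‖y i - yhat i‖ = ‖yhat i - y i‖ := norm_sub_rev _ _
    rw [e2, e3, e4] at h
    linarith [h]
  have hIIsum : ∑ i, fstar i (yhat i) + ∑ i, ⟪Sinv i (yhat i - yk i), yhat i - y i⟫
      + ∑ i, ⟪A i x1, y i⟫ - ∑ i, ⟪A i x1, yhat i⟫
      + ∑ i, μ i / 2 * ‖yhat i - y i‖ ^ 2 ≤ ∑ i, fstar i (y i) := by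
    have h := Finset.sum_le_sum (fun i (_ : i ∈ Finset.univ) => hII i)
    simp only [Finset.sum_add_distrib, Finset.sum_sub_distrib] at h
    linarith [h]
  -- quadratic expansion identities
  have hQT : ⟪Tinv (xk - x), xk - x⟫ = ⟪Tinv (x1 - x), x1 - x⟫
      + ⟪Tinv (x1 - xk), x1 - xk⟫ - 2 * ⟪Tinv (x1 - xk), x1 - x⟫ := by
    have hs : ⟪Tinv (x1 - x), x1 - xk⟫ = ⟪Tinv (x1 - xk), x1 - x⟫ := by
      rw [hTinvsym, real_inner_comm]
    rw [show xk - x = (x1 - x) - (x1 - xk) from by abel,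
      quad_expand Tinv hTinvsym, hs]
    ring
  have hQS : ∑ i, ⟪Sinv i (yk i - y i), yk i - y i⟫
      = ∑ i, ⟪Sinv i (yhat i - y i), yhat i - y i⟫
      + ∑ i, ⟪Sinv i (yhat i - yk i), yhat i - yk i⟫
      - 2 * ∑ i, ⟪Sinv i (yhat i - yk i), yhat i - y i⟫ := by
    rw [Finset.mul_sum, ← Finset.sum_add_distrib, ← Finset.sum_sub_distrib]
    refine Finset.sum_congr rfl fun i _ => ?_
    have hs : ⟪Sinv i (yhat i - y i), yhat i - yk i⟫
        = ⟪Sinv i (yhat i - yk i), yhat i - y i⟫ := by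
      rw [hSinvsym, real_inner_comm]
    rw [show yk i - y i = (yhat i - y i) - (yhat i - yk i) from by abel,
      quad_expand (Sinv i) (hSinvsym i), hs]
    ring
  -- expansion of goal's composite terms
  have hE1 : ∑ i, ⟪A i (x1 - x), yhat i - ybar i⟫
      = ∑ i, ⟪A i x1, yhat i⟫ - ∑ i, ⟪A i x1, ybar i⟫
      - ∑ i, ⟪A i x, yhat i⟫ + ∑ i, ⟪A i x, ybar i⟫ := by
    rw [← Finset.sum_sub_distrib, ← Finset.sum_sub_distrib, ← Finset.sum_add_distrib]
    refine Finset.sum_congr rfl fun i _ => ?_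
    rw [map_sub, inner_sub_left, inner_sub_right, inner_sub_right]
    ring
  have hE2 : ⟪-(∑ i, (ContinuousLinearMap.adjoint (A i)) (y i)), x1 - x⟫
      = ∑ i, ⟪A i x, y i⟫ - ∑ i, ⟪A i x1, y i⟫ := by
    rw [inner_neg_left, sum_inner, ← Finset.sum_sub_distrib, ← Finset.sum_neg_distrib]
    refine Finset.sum_congr rfl fun i _ => ?_
    rw [ContinuousLinearMap.adjoint_inner_left, map_sub, inner_sub_right,
      real_inner_comm (y i) (A i x), real_inner_comm (y i) (A i x1)]
    ring
  have hE3 : ∑ i, (fstar i (yhat i) - fstar i (y i) - ⟪A i x, yhat i - y i⟫)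
      = ∑ i, fstar i (yhat i) - ∑ i, fstar i (y i)
      - ∑ i, ⟪A i x, yhat i⟫ + ∑ i, ⟪A i x, y i⟫ := by
    rw [← Finset.sum_sub_distrib, ← Finset.sum_sub_distrib, ← Finset.sum_add_distrib]
    refine Finset.sum_congr rfl fun i _ => ?_
    rw [inner_sub_right]; ring
  have hE4 : ∑ i, (⟪Sinv i (yhat i - y i), yhat i - y i⟫ + μ i * ‖yhat i - y i‖ ^ 2)
      = ∑ i, ⟪Sinv i (yhat i - y i), yhat i - y i⟫
      + 2 * ∑ i, μ i / 2 * ‖yhat i - y i‖ ^ 2 := by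
    rw [Finset.sum_add_distrib, Finset.mul_sum]
    congr 1
    refine Finset.sum_congr rfl fun i _ => by ring
  rw [hE2, hE3, hE4, hE1, hQT, hQS]
  linarith [hIfin, hIIsum]
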